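/- Let F = ℤ/2ℤ and R₂ = F[X₁,X₂]/(X₁²,X₂²). Consider the free R₂-resolution P• : ⋯ →^{X₁+X₂} R₂ →^{X₁+X₂} R₂ →^{X₁+X₂} R₂ of M = R₂/(X₁+X₂) (with appropriate grading shifts), and the chain map g : P• → P• given in each degree n ≤ -1 by the identity map P_n → P_{n+1} (shifting homological degree by +1) and zero out of P_0. Then g is a chain map of R₂-complexes, and after applying −⊗_{R₂}F[X]/(X²) (where X₁,X₂ both act as X) and taking homology, the induced map on H(M ⊗^L_{R₂} F[X]/X²) is nonzero. In particular, g represents a nonzero morphism M → M[1] in the derived category of R₂-modules. -/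

import Mathlib

/-!
STATEMENT 16: Let F = ℤ/2ℤ, R₂ = F[X₁,X₂]/(X₁²,X₂²), s = X₁+X₂, and consider the free
resolution P• : ⋯ →^{s} R₂ →^{s} R₂ of M = R₂/(s) (we index the copies of R₂ by k ∈ ℕ,
with differential multiplication by s from the (k+1)-st copy to the k-th).  Let g be the
degree +1 map given by the identity P_k → P_{k-1} for k ≥ 1 and zero out of P_0.  Then:
(i) g is a chain map of R₂-complexes;
(ii) after base change along R₂ → F[X]/(X²) (X₁,X₂ ↦ X) the differential becomes zero
and the maps induced by g on homology are nonzero;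
(iii) g is not null-homotopic, i.e. it represents a nonzero morphism M → M[1] in the
derived category of R₂-modules.
-/

set_option synthInstance.maxHeartbeats 1000000
set_option maxHeartbeats 1000000

noncomputable section

abbrev F2 := ZMod 2

abbrev Rtwo : Type :=
  MvPolynomial (Fin 2) F2 ⧸
    Ideal.span {(MvPolynomial.X 0 : MvPolynomial (Fin 2) F2) ^ 2, (MvPolynomial.X 1) ^ 2}

def x1R : Rtwo := Ideal.Quotient.mk _ (MvPolynomial.X 0)
def x2R : Rtwo := Ideal.Quotient.mk _ (MvPolynomial.X 1)

/-- `s = X₁ + X₂`. -/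
def sR : Rtwo := x1R + x2R

/-- The differential of `P•`: multiplication by `s`, as an `R₂`-linear map. -/
def dP : Rtwo →ₗ[Rtwo] Rtwo := LinearMap.lsmul Rtwo Rtwo sR

/-- The degree `+1` map `g`: the identity `P_k → P_{k-1}` for `k ≥ 1`, zero out of `P_0`. -/
def gP : ℕ → (Rtwo →ₗ[Rtwo] Rtwo) := fun k => if k = 0 then 0 else LinearMap.id

/-- `B = F[X]/(X²)`, the base change of `R₂` collapsing `X₁, X₂` to `X`. -/
abbrev Bsq : Type := Polynomial F2 ⧸ Ideal.span {(Polynomial.X : Polynomial F2) ^ 2}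

def xB : Bsq := Ideal.Quotient.mk _ Polynomial.X

lemma LinearMap.id_ne_lsmul_comp_add_comp_lsmul {R : Type*} [CommRing R] [Nontrivial R] {s : R}
    (hs : IsNilpotent s) (h₀ h₁ : R →ₗ[R] R) :
    LinearMap.id ≠ (LinearMap.lsmul R R s).comp h₁ + h₀.comp (LinearMap.lsmul R R s) := by
  intro h
  have hunit := LinearMap.congr_fun h 1
  rw [LinearMap.id_apply, LinearMap.add_apply, LinearMap.comp_apply, LinearMap.comp_apply,
    LinearMap.lsmul_apply, LinearMap.lsmul_apply, map_smul, ← smul_add, smul_eq_mul] at hunit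
  exact hs.not_isUnit (.of_mul_eq_one _ hunit.symm)

lemma gP_zero : gP 0 = 0 := rfl

lemma gP_of_ne_zero {k : ℕ} (hk : k ≠ 0) : gP k = LinearMap.id := if_neg hk

lemma isNilpotent_sR : IsNilpotent sR := by
  have hsq (i : Fin 2) : (Ideal.Quotient.mk _ (MvPolynomial.X i) : Rtwo) ^ 2 = 0 := by
    rw [← map_pow, Ideal.Quotient.eq_zero_iff_mem]
    exact Ideal.subset_span (by fin_cases i <;> simp)
  exact (Commute.all _ _).isNilpotent_add ⟨2, hsq 0⟩ ⟨2, hsq 1⟩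

instance : Nontrivial Bsq :=
  Ideal.Quotient.nontrivial_iff.2 <| Ideal.span_singleton_ne_top <|
    (isUnit_pow_iff two_ne_zero).not.2 Polynomial.not_isUnit_X

instance : CharP Bsq 2 := charP_of_injective_algebraMap' F2 2

lemma xB_sq : xB ^ 2 = 0 := Ideal.Quotient.mk_singleton_self _

def piR : Rtwo →ₐ[F2] Bsq :=
  Ideal.Quotient.liftₐ _ (MvPolynomial.aeval fun _ => xB) fun _ ha => by
    refine (Ideal.span_le.2 ?_ : _ ≤ RingHom.ker (MvPolynomial.aeval fun _ => xB)) ha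
    rintro _ (rfl | rfl) <;> simp [xB_sq]

lemma piR_x1R : piR x1R = xB := MvPolynomial.aeval_X _ _

lemma piR_x2R : piR x2R = xB := MvPolynomial.aeval_X _ _

lemma piR_sR : piR sR = 0 := by
  rw [sR, map_add, piR_x1R, piR_x2R, CharTwo.add_self_eq_zero]

instance : Nontrivial Rtwo := piR.toRingHom.domain_nontrivial

theorem stmt16 :
    -- (i) g is a chain map (the square at the tail of the complex commutes trivially
    -- since the target of g out of P₀ is the zero module)
    (∀ k : ℕ, 1 ≤ k → (gP k).comp dP = dP.comp (gP (k + 1))) ∧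
    (gP 0).comp dP = 0 ∧
    -- (ii) after base change along π : R₂ → F[X]/X², the differential becomes zero,
    -- so homology is the complex itself, and g induces nonzero maps on homology
    (∃ π : Rtwo →ₐ[F2] Bsq, π x1R = xB ∧ π x2R = xB ∧
      π sR = 0 ∧
      ∀ k : ℕ, 1 ≤ k →
        (LinearMap.mulLeft F2 (π ((gP k) 1)) : Bsq →ₗ[F2] Bsq) ≠ 0) ∧
    -- (iii) g is not null-homotopic over R₂ (nonzero in the derived category)
    ¬ ∃ H : ℕ → (Rtwo →ₗ[Rtwo] Rtwo),
        ∀ k : ℕ, gP (k + 1) = dP.comp (H (k + 1)) + (H k).comp dP := by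
  refine ⟨fun k hk => ?_, by rw [gP_zero, LinearMap.zero_comp],
    ⟨piR, piR_x1R, piR_x2R, piR_sR, fun k hk => ?_⟩, ?_⟩
  · rw [gP_of_ne_zero (by omega), gP_of_ne_zero (by omega), LinearMap.id_comp, LinearMap.comp_id]
  · rw [gP_of_ne_zero (by omega), LinearMap.id_apply, map_one, LinearMap.mulLeft_one]
    exact one_ne_zero (α := Module.End F2 Bsq)
  · rintro ⟨H, hH⟩
    -- the homotopy equation in degree 0 would make `s` a unit
    exact LinearMap.id_ne_lsmul_comp_add_comp_lsmul isNilpotent_sR (H 0) (H 1)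
      ((gP_of_ne_zero one_ne_zero).symm.trans (hH 0))
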